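/- Assumptions and notation as in the Section 3 construction: (W,S) is an irreducible Coxeter system of finite rank with m_{st} < ∞ for all s,t ∈ S, whose Coxeter graph G = (S,E) contains at least two circuits; T = (S,E_0) is a spanning tree of G and {s_1,t_1}, {s_2,t_2} ∈ E ∖ E_0 are two distinct edges. Then the prescribed linear operators, one for each s ∈ S, on V := ⊕_{n∈ℤ, s∈S} ℂ α_{s,n} define a representation of W on V; that is, each operator is an involution, the operator assigned to s and the operator assigned to t satisfy ((st)-operator)^{m_{st}} = id for all s,t ∈ S, and hence s ↦ (its operator) extends to a group homomorphism from W to GL(V). -/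

import Mathlib

open Finsupp in
/-- The Section 3 operators: for each `s ∈ S`, a linear operator on
`V = ⊕_{n ∈ ℤ, t ∈ S} ℂ α_{t,n}`, where `α_{t,n}` is the standard basis vector
`Finsupp.single (t, n) 1`.  Here `M` is the Coxeter matrix (all of whose entries are assumed
finite), and `{s₁,t₁}`, `{s₂,t₂}` are the two chosen edges of the Coxeter graph outside of the
spanning tree.  The defining formulas are:
(i) `s·α_{s,n} = −α_{s,n}`;
(ii) `s₁·α_{t₁,n} = α_{t₁,n} + 2cos(π/m_{s₁t₁}) α_{s₁,n+1}`,
     `t₁·α_{s₁,n+1} = α_{s₁,n+1} + 2cos(π/m_{s₁t₁}) α_{t₁,n}`,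
     `s₂·α_{t₂,n} = α_{t₂,n} + 2^{n+1}cos(π/m_{s₂t₂}) α_{s₂,n+1}`,
     `t₂·α_{s₂,n+1} = α_{s₂,n+1} + 2^{−n+1}cos(π/m_{s₂t₂}) α_{t₂,n}`;
(iii) otherwise, for `s ≠ t`, `s·α_{t,n} = α_{t,n} + 2cos(π/m_{st}) α_{s,n}`
      (which is `α_{t,n}` when `m_{st} = 2` since `cos(π/2) = 0`). -/
noncomputable def sec3Act {B : Type*} [DecidableEq B] (M : CoxeterMatrix B)
    (s₁ t₁ s₂ t₂ : B) (s : B) : ((B × ℤ) →₀ ℂ) →ₗ[ℂ] ((B × ℤ) →₀ ℂ) :=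
  Finsupp.lift _ ℂ _ fun p =>
    if s = p.1 then -single p 1
    else if s = s₁ ∧ p.1 = t₁ then
      single p 1 + (2 * Real.cos (Real.pi / (M s₁ t₁ : ℝ)) : ℂ) • single (s₁, p.2 + 1) 1
    else if s = t₁ ∧ p.1 = s₁ then
      single p 1 + (2 * Real.cos (Real.pi / (M s₁ t₁ : ℝ)) : ℂ) • single (t₁, p.2 - 1) 1
    else if s = s₂ ∧ p.1 = t₂ then
      single p 1 + ((2 : ℂ) ^ (p.2 + 1) * (Real.cos (Real.pi / (M s₂ t₂ : ℝ)) : ℂ)) •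
        single (s₂, p.2 + 1) 1
    else if s = t₂ ∧ p.1 = s₂ then
      single p 1 + ((2 : ℂ) ^ (2 - p.2) * (Real.cos (Real.pi / (M s₂ t₂ : ℝ)) : ℂ)) •
        single (t₂, p.2 - 1) 1
    else
      single p 1 + (2 * Real.cos (Real.pi / (M s p.1 : ℝ)) : ℂ) • single (s, p.2) 1

/-- The Coxeter graph of a Coxeter matrix `M`. -/
def coxeterGraph {B : Type*} (M : CoxeterMatrix B) : SimpleGraph B where
  Adj s t := s ≠ t ∧ M s t ≠ 2
  symm := by
    constructor
    intro s t h
    exact ⟨h.1.symm, by rw [M.symmetric]; exact h.2⟩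
  loopless := by constructor; intro s h; exact h.1 rfl

/-- The subspace of vectors fixed by all the operators `σ s`. -/
def fixedSubmodule {B V : Type*} [AddCommGroup V] [Module ℂ V]
    (σ : B → V →ₗ[ℂ] V) : Submodule ℂ V where
  carrier := {v | ∀ s, σ s v = v}
  add_mem' := by
    intro a b ha hb s
    simp [map_add, ha s, hb s]
  zero_mem' := by intro s; simp
  smul_mem' := by
    intro c a ha s
    simp [map_smul, ha s]

/-!
Each `sec3Act s` negates `α_{s,n}` and moves every other basis vector only by a multiple of some
`α_{s,k}`, so it is an involution. For `s ≠ t` with `m = m_{st} ≥ 2`, write `σ_s α_{t,n}` and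
`σ_t α_{s,n+ε}` in terms of the other vector of the pair: the plane they span is stable, and the
two coefficients are `w cos(π/m)` and `w' cos(π/m)` with `w w' = 4`, the powers of `2` attached to
`{s₂,t₂}` cancelling. So on that plane `g = σ_s σ_t` has determinant `1` and trace
`4 cos²(π/m) - 2 = ζ + ζ⁻¹` with `ζ = exp(2πi/m)`, and `1 + g + ⋯ + g^{m-1}` vanishes on the span
`U` of all the `α_{s,k}` and `α_{t,k}`. Since `g - 1` maps everything into `U`,
`g^m - 1 = (1 + g + ⋯ + g^{m-1})(g - 1) = 0`. When `m_{st} = ∞` (encoded as `0`) there is nothing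
to prove.
-/

open Finset Polynomial Complex Finsupp

theorem geom_sum_apply_eq_zero_of_apply_eq_smul {K V : Type*} [Field K] [AddCommGroup V]
    [Module K V] {g : Module.End K V} {ζ : K} {m : ℕ} (hζ : IsPrimitiveRoot ζ m) (hm : 1 < m)
    {u : V} (hu : g u = ζ • u) : (∑ i ∈ range m, g ^ i) u = 0 := by
  have := Module.End.aeval_apply_of_mem_apply_eq_smul (p := ∑ i ∈ range m, X ^ i) hu
  simpa [map_sum, eval_finsetSum, hζ.geom_sum_eq_zero hm] using this

theorem geom_sum_apply_eq_zero_of_isPrimitiveRoot {K V : Type*} [Field K] [AddCommGroup V]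
    [Module K V] (g : Module.End K V) {ζ : K} {m : ℕ} (hζ : IsPrimitiveRoot ζ m) (hm : 2 < m)
    {v : V} (hv : g (g v) - (ζ + ζ⁻¹) • g v + v = 0) : (∑ i ∈ range m, g ^ i) v = 0 := by
  -- `g v - ζ⁻¹ • v` and `g v - ζ • v` are eigenvectors for `ζ` and `ζ⁻¹`, and `ζ ≠ ζ⁻¹`.
  have hζ0 : ζ ≠ 0 := hζ.ne_zero (by omega)
  have hne : ζ - ζ⁻¹ ≠ 0 := by
    rw [sub_ne_zero]
    intro h
    apply hζ.pow_ne_one_of_pos_of_lt two_ne_zero hm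
    rw [sq]; nth_rewrite 2 [h]; exact mul_inv_cancel₀ hζ0
  have h₁ : (∑ i ∈ range m, g ^ i) (g v - ζ⁻¹ • v) = 0 := by
    refine geom_sum_apply_eq_zero_of_apply_eq_smul hζ (by omega) ?_
    rw [map_sub, map_smul, smul_sub, smul_smul, mul_inv_cancel₀ hζ0, one_smul]
    linear_combination (norm := module) hv
  have h₂ : (∑ i ∈ range m, g ^ i) (g v - ζ • v) = 0 := by
    refine geom_sum_apply_eq_zero_of_apply_eq_smul hζ.inv (by omega) ?_
    rw [map_sub, map_smul, smul_sub, smul_smul, inv_mul_cancel₀ hζ0, one_smul]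
    linear_combination (norm := module) hv
  have hv' : (ζ - ζ⁻¹) • v = (g v - ζ⁻¹ • v) - (g v - ζ • v) := by module
  have hS : (ζ - ζ⁻¹) • (∑ i ∈ range m, g ^ i) v = 0 := by
    rw [← map_smul, hv', map_sub, h₁, h₂, sub_zero]
  exact (smul_eq_zero.mp hS).resolve_left hne

theorem exp_two_pi_I_div_add_inv (m : ℕ) :
    exp (2 * Real.pi * I / m) + (exp (2 * Real.pi * I / m))⁻¹ =
      4 * (Real.cos (Real.pi / m) : ℂ) ^ 2 - 2 := by
  have h := Complex.two_cos (2 * Real.pi / m)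
  rw [← Complex.exp_neg, Complex.ofReal_cos, Complex.cos_sq]
  push_cast
  convert h.symm using 2 <;> ring_nf

theorem geom_sum_reflection_mul_apply_eq_zero {V : Type*} [AddCommGroup V] [Module ℂ V]
    {r₁ r₂ : Module.End ℂ V} {x y : V} {m : ℕ} (hm : 2 ≤ m) {p q : ℂ} (hpq : p * q = 4)
    (h₁x : r₁ x = x + (p * Real.cos (Real.pi / m)) • y) (h₁y : r₁ y = -y)
    (h₂x : r₂ x = -x) (h₂y : r₂ y = y + (q * Real.cos (Real.pi / m)) • x) :
    (∑ i ∈ range m, (r₁ * r₂) ^ i) x = 0 ∧ (∑ i ∈ range m, (r₁ * r₂) ^ i) y = 0 := by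
  set c : ℂ := (Real.cos (Real.pi / m) : ℂ)
  set g := r₁ * r₂
  have hgx : g x = -x - (p * c) • y := by
    rw [Module.End.mul_apply, h₂x, map_neg, h₁x]; module
  have hgy : g y = (q * c) • x + (p * q * c ^ 2 - 1) • y := by
    rw [Module.End.mul_apply, h₂y, map_add, map_smul, h₁x, h₁y]; module
  obtain rfl | hm := hm.eq_or_lt
  · have hc : c = 0 := by simp [c]
    simp [Finset.sum_range_succ, hgx, hgy, hc]
  have hζ := Complex.isPrimitiveRoot_exp m (by omega)
  have hτ : exp (2 * Real.pi * I / m) + (exp (2 * Real.pi * I / m))⁻¹ = p * q * c ^ 2 - 2 := by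
    rw [exp_two_pi_I_div_add_inv, hpq]
  constructor <;> refine geom_sum_apply_eq_zero_of_isPrimitiveRoot g hζ hm ?_ <;> rw [hτ]
  · rw [hgx, map_sub, map_neg, map_smul, hgx, hgy]; module
  · rw [hgy, map_add, map_smul, map_smul, hgx, hgy]; module

theorem Module.End.pow_eq_one_of_range_sub_one_le_ker {R V : Type*} [CommRing R]
    [AddCommGroup V] [Module R V] {g : Module.End R V} {m : ℕ}
    (h : LinearMap.range (g - 1) ≤ LinearMap.ker (∑ i ∈ range m, g ^ i)) : g ^ m = 1 := by
  rw [← sub_eq_zero, ← geom_sum_mul, Module.End.mul_eq_comp, ← LinearMap.range_le_ker_iff]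
  exact h

section

def sec3Shift {B : Type*} [DecidableEq B] (s₁ t₁ s₂ t₂ s u : B) : ℤ :=
  if s = s₁ ∧ u = t₁ then 1 else if s = t₁ ∧ u = s₁ then -1
  else if s = s₂ ∧ u = t₂ then 1 else if s = t₂ ∧ u = s₂ then -1 else 0

noncomputable def sec3Weight {B : Type*} [DecidableEq B] (s₁ t₁ s₂ t₂ s u : B) (n : ℤ) : ℂ :=
  if s = s₁ ∧ u = t₁ then 2 else if s = t₁ ∧ u = s₁ then 2
  else if s = s₂ ∧ u = t₂ then 2 ^ (n + 1) else if s = t₂ ∧ u = s₂ then 2 ^ (2 - n) else 2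

variable {B : Type*} [DecidableEq B] {M : CoxeterMatrix B} {s₁ t₁ s₂ t₂ : B}

theorem sec3Shift_swap {s u : B} (h : s ≠ u) :
    sec3Shift s₁ t₁ s₂ t₂ u s = -sec3Shift s₁ t₁ s₂ t₂ s u := by
  unfold sec3Shift
  split_ifs <;> simp_all

theorem sec3Weight_mul_swap {s u : B} (h : s ≠ u) (n : ℤ) :
    sec3Weight s₁ t₁ s₂ t₂ s u n *
      sec3Weight s₁ t₁ s₂ t₂ u s (n + sec3Shift s₁ t₁ s₂ t₂ s u) = 4 := by
  unfold sec3Weight sec3Shift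
  split_ifs <;> simp_all [← zpow_add₀ (two_ne_zero (α := ℂ))] <;> norm_num

theorem sec3Act_single_self (s : B) (n : ℤ) :
    sec3Act M s₁ t₁ s₂ t₂ s (single (s, n) 1) = -single (s, n) 1 := by
  simp [sec3Act]

theorem sec3Act_single_of_ne {s u : B} (h : s ≠ u) (n : ℤ) :
    sec3Act M s₁ t₁ s₂ t₂ s (single (u, n) 1) = single (u, n) 1 +
      (sec3Weight s₁ t₁ s₂ t₂ s u n * Real.cos (Real.pi / M s u)) •
        single (s, n + sec3Shift s₁ t₁ s₂ t₂ s u) 1 := by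
  simp only [sec3Act, Finsupp.lift_apply, sec3Weight, sec3Shift]
  rw [Finsupp.sum_single_index (by simp), one_smul]
  split_ifs <;> simp_all [M.symmetric, sub_eq_add_neg]

theorem sec3Act_mul_self (s : B) : sec3Act M s₁ t₁ s₂ t₂ s * sec3Act M s₁ t₁ s₂ t₂ s = 1 := by
  ext ⟨u, n⟩ : 2
  simp only [LinearMap.comp_apply, lsingle_apply]
  obtain rfl | h := eq_or_ne s u
  · simp [sec3Act_single_self]
  · rw [Module.End.mul_apply, sec3Act_single_of_ne h, map_add, map_smul, sec3Act_single_of_ne h,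
      sec3Act_single_self, Module.End.one_apply]
    module

theorem sec3Act_apply_sub_mem_supported (s : B) (v : (B × ℤ) →₀ ℂ) :
    sec3Act M s₁ t₁ s₂ t₂ s v - v ∈ supported ℂ ℂ {p : B × ℤ | p.1 = s} := by
  induction v using Finsupp.induction_linear with
  | zero => simp
  | add v w hv hw => rw [map_add, add_sub_add_comm]; exact add_mem hv hw
  | single p c =>
    obtain ⟨u, n⟩ := p
    rw [← smul_single_one (u, n) c, map_smul, ← smul_sub]
    refine Submodule.smul_mem _ _ ?_
    obtain rfl | h := eq_or_ne s u
    · rw [sec3Act_single_self, ← neg_add', ← two_smul ℂ]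
      exact Submodule.neg_mem _ (Submodule.smul_mem _ _ (single_mem_supported ℂ _ rfl))
    · rw [sec3Act_single_of_ne h, add_sub_cancel_left]
      exact Submodule.smul_mem _ _ (single_mem_supported ℂ _ rfl)

theorem range_sec3Act_mul_sub_one_le (s t : B) :
    LinearMap.range (sec3Act M s₁ t₁ s₂ t₂ s * sec3Act M s₁ t₁ s₂ t₂ t - 1) ≤
      supported ℂ ℂ {p : B × ℤ | p.1 = s ∨ p.1 = t} := by
  rintro _ ⟨v, rfl⟩
  have hsplit : (sec3Act M s₁ t₁ s₂ t₂ s * sec3Act M s₁ t₁ s₂ t₂ t - 1) v =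
      (sec3Act M s₁ t₁ s₂ t₂ s (sec3Act M s₁ t₁ s₂ t₂ t v) - sec3Act M s₁ t₁ s₂ t₂ t v) +
        (sec3Act M s₁ t₁ s₂ t₂ t v - v) := by simp
  rw [hsplit]
  exact add_mem (supported_mono (fun _ => Or.inl) (sec3Act_apply_sub_mem_supported s _))
    (supported_mono (fun _ => Or.inr) (sec3Act_apply_sub_mem_supported t v))

theorem supported_le_ker_geom_sum_sec3Act_mul {s t : B} (hst : s ≠ t) (hm : 2 ≤ M s t) :
    supported ℂ ℂ {p : B × ℤ | p.1 = s ∨ p.1 = t} ≤ LinearMap.ker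
      (∑ i ∈ range (M s t), (sec3Act M s₁ t₁ s₂ t₂ s * sec3Act M s₁ t₁ s₂ t₂ t) ^ i) := by
  set ε := sec3Shift s₁ t₁ s₂ t₂ s t
  have hplane (n : ℤ) := geom_sum_reflection_mul_apply_eq_zero (x := single (t, n) 1)
    (y := single (s, n + ε) 1) hm (sec3Weight_mul_swap hst n)
    (sec3Act_single_of_ne hst n) (sec3Act_single_self s _)
    (sec3Act_single_self t n) (by
      rw [sec3Act_single_of_ne hst.symm, sec3Shift_swap hst, M.symmetric,
        add_neg_cancel_right])
  rw [supported_eq_span_single, Submodule.span_le]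
  rintro _ ⟨⟨u, k⟩, rfl | rfl, rfl⟩
  · simpa using (hplane (k - ε)).2
  · exact (hplane k).1

theorem sec3Act_mul_pow_eq_one {s t : B} (hst : s ≠ t) :
    (sec3Act M s₁ t₁ s₂ t₂ s * sec3Act M s₁ t₁ s₂ t₂ t) ^ M s t = 1 := by
  obtain h0 | hm : M s t = 0 ∨ 2 ≤ M s t := by have := M.off_diagonal s t hst; omega
  · rw [h0, pow_zero]
  · exact Module.End.pow_eq_one_of_range_sub_one_le_ker
      ((range_sec3Act_mul_sub_one_le s t).trans
        (supported_le_ker_geom_sum_sec3Act_mul hst hm))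

end

theorem statement2 {B W : Type*} [Group W] [DecidableEq B]
    (M : CoxeterMatrix B) (cs : CoxeterSystem M W)
    (s₁ t₁ s₂ t₂ : B) :
    (∀ s : B, sec3Act M s₁ t₁ s₂ t₂ s * sec3Act M s₁ t₁ s₂ t₂ s = 1) ∧
    (∀ s t : B, (sec3Act M s₁ t₁ s₂ t₂ s * sec3Act M s₁ t₁ s₂ t₂ t) ^ (M s t) = 1) ∧
    ∃ ρ : Representation ℂ W ((B × ℤ) →₀ ℂ),
      ∀ s : B, ρ (cs.simple s) = sec3Act M s₁ t₁ s₂ t₂ s := by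
  have hrel : M.IsLiftable (sec3Act M s₁ t₁ s₂ t₂) := fun s t => by
    obtain rfl | hst := eq_or_ne s t
    · simpa [M.diagonal] using sec3Act_mul_self s
    · exact sec3Act_mul_pow_eq_one hst
  exact ⟨sec3Act_mul_self, hrel, cs.lift ⟨_, hrel⟩, cs.lift_apply_simple hrel⟩
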